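/- arXiv:hep-th/0012164 — 5 statements merged into one kernel-verified Lean document; each statement's English description precedes it below -/
import Mathlib

section
/- For all integers N ≥ 2, k ≥ 0, and i with 1 ≤ i ≤ N−1, the integer x := (k+N)/gcd(k+N, lcm(1,2,…,N−1)) divides the integer a_i = (∏_{j=1, j≠i}^{N} (k+j)) / ((i−1)!·(N−i)!). -/
open Finset

private lemma prodA (k a : ℕ) : ∀ m : ℕ,
    (∏ j ∈ Finset.Icc (a + 1) (a + m), (k + j)) * Nat.factorial (k + a) =
      Nat.factorial (k + a + m) := by
  intro m
  induction m with
  | zero => simp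
  | succ m ih =>
    rw [show a + (m + 1) = (a + m) + 1 from rfl,
      Finset.prod_Icc_succ_top (by omega : a + 1 ≤ a + m + 1)]
    rw [show k + a + (m + 1) = (k + a + m) + 1 from rfl, Nat.factorial_succ]
    rw [mul_comm (∏ j ∈ Finset.Icc (a + 1) (a + m), (k + j)) (k + (a + m + 1)),
      mul_assoc, ih]
    ring_nf

private lemma prodB (k a m : ℕ) :
    (∏ j ∈ Finset.Icc (a + 1) (a + m), (k + j)) =
      Nat.choose (k + a + m) m * Nat.factorial m := by
  have h1 := prodA k a m
  have h2 := Nat.choose_mul_factorial_mul_factorial (show m ≤ k + a + m by omega)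
  rw [show k + a + m - m = k + a by omega] at h2
  have := h1.trans h2.symm
  exact Nat.eq_of_mul_eq_mul_right (Nat.factorial_pos (k + a)) (by linarith [this])

private lemma div_gcd_dvd_choose (n m : ℕ) (hm : 0 < m) (hn : 0 < n) :
    n / Nat.gcd n m ∣ Nat.choose n m := by
  have hg : 0 < Nat.gcd n m := Nat.gcd_pos_of_pos_right _ hm
  have hdvd : n ∣ m * Nat.choose n m := by
    obtain ⟨n', rfl⟩ := Nat.exists_eq_succ_of_ne_zero hn.ne'
    obtain ⟨m', rfl⟩ := Nat.exists_eq_succ_of_ne_zero hm.ne'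
    have := Nat.add_one_mul_choose_eq n' m'
    exact ⟨Nat.choose n' m', by rw [this]; exact (mul_comm _ _)⟩
  obtain ⟨n', hn'⟩ := Nat.gcd_dvd_left n m
  obtain ⟨m', hm'⟩ := Nat.gcd_dvd_right n m
  have hq1 := Nat.mul_div_cancel_left n' hg
  rw [← hn'] at hq1
  have hq2 := Nat.mul_div_cancel_left m' hg
  rw [← hm'] at hq2
  have hco : Nat.Coprime n' m' := by
    have := Nat.coprime_div_gcd_div_gcd hg
    rwa [hq1, hq2] at this
  rw [hq1]
  refine hco.dvd_of_dvd_mul_left ?_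
  have : Nat.gcd n m * n' ∣ Nat.gcd n m * (m' * Nat.choose n m) := by
    rw [← hn', ← mul_assoc, ← hm']; exact hdvd
  exact (mul_dvd_mul_iff_left hg.ne').mp this

/-- For all integers `N ≥ 2`, `k ≥ 0`, and `i` with `1 ≤ i ≤ N-1`,
the integer `x = (k+N) / gcd(k+N, lcm(1,…,N-1))` divides the integer
`a_i = (∏_{j=1, j≠i}^{N} (k+j)) / ((i-1)! * (N-i)!)`. -/
theorem x_dvd_ai (N k i : ℕ) (hN : 2 ≤ N) (hi1 : 1 ≤ i) (hi2 : i ≤ N - 1) :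
    (k + N) / Nat.gcd (k + N) ((Finset.Icc 1 (N - 1)).lcm id) ∣
      (∏ j ∈ (Finset.Icc 1 N).erase i, (k + j)) /
        (Nat.factorial (i - 1) * Nat.factorial (N - i)) := by
  set n := k + N with hn
  set L := (Finset.Icc 1 (N - 1)).lcm id with hL
  set g := Nat.gcd n L with hg
  have him : i ≤ N := by omega
  have hm1 : 1 ≤ N - i := by omega
  -- split the product
  have hsplit : (Finset.Icc 1 N).erase i =
      Finset.Icc 1 (i - 1) ∪ Finset.Icc (i + 1) N := by
    ext j
    simp only [Finset.mem_erase, Finset.mem_Icc, Finset.mem_union]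
    omega
  have hdisj : Disjoint (Finset.Icc 1 (i - 1)) (Finset.Icc (i + 1) N) := by
    rw [Finset.disjoint_left]
    intro j hj hj'
    simp only [Finset.mem_Icc] at hj hj'
    omega
  have hp1 : (∏ j ∈ Finset.Icc 1 (i - 1), (k + j)) =
      Nat.choose (k + i - 1) (i - 1) * Nat.factorial (i - 1) := by
    have := prodB k 0 (i - 1)
    simp only [Nat.zero_add, Nat.add_zero] at this
    rw [this]
    congr 2
    omega
  have hp2 : (∏ j ∈ Finset.Icc (i + 1) N, (k + j)) =
      Nat.choose n (N - i) * Nat.factorial (N - i) := by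
    have := prodB k i (N - i)
    rw [show i + (N - i) = N by omega, show k + i + (N - i) = n by omega] at this
    exact this
  have hprod : (∏ j ∈ (Finset.Icc 1 N).erase i, (k + j)) =
      (Nat.factorial (i - 1) * Nat.factorial (N - i)) *
        (Nat.choose (k + i - 1) (i - 1) * Nat.choose n (N - i)) := by
    rw [hsplit, Finset.prod_union hdisj, hp1, hp2]
    ring
  rw [hprod, Nat.mul_div_cancel_left _
    (Nat.mul_pos (Nat.factorial_pos _) (Nat.factorial_pos _))]
  -- divisibility
  have hnpos : 0 < n := by omega
  have hmpos : 0 < N - i := hm1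
  have hgm : 0 < Nat.gcd n (N - i) := Nat.gcd_pos_of_pos_right _ hmpos
  have hgpos : 0 < g := Nat.gcd_pos_of_pos_left _ hnpos
  have hmL : (N - i) ∣ L := by
    have : (N - i) ∈ Finset.Icc 1 (N - 1) := Finset.mem_Icc.mpr ⟨hm1, by omega⟩
    exact Finset.dvd_lcm this
  have hsub : Nat.gcd n (N - i) ∣ g :=
    Nat.dvd_gcd (Nat.gcd_dvd_left _ _) ((Nat.gcd_dvd_right n (N - i)).trans hmL)
  have hx : n / g ∣ n / Nat.gcd n (N - i) := by
    obtain ⟨c, hc⟩ := hsub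
    obtain ⟨d, hd⟩ := Nat.gcd_dvd_left n L
    have h1 := Nat.mul_div_cancel_left d hgpos
    rw [← hd] at h1
    have h2 := Nat.mul_div_cancel_left (c * d) hgm
    rw [← mul_assoc, ← hc, ← hd] at h2
    rw [h1, h2]
    exact dvd_mul_left d c
  exact (hx.trans (div_gcd_dvd_choose n (N - i) hmpos hnpos)).trans
    (dvd_mul_left _ _)
end

section
/- For all integers N ≥ 2 and k ≥ 0, the greatest common divisor of the integers a_1, a_2, …, a_{N−1} equals x = (k+N)/gcd(k+N, lcm(1,2,…,N−1)). -/
open Finset Nat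

theorem fact_choose {p n k b : ℕ} (hp : p.Prime) (hkn : k ≤ n) (hnb : Nat.log p n < b) :
    (n.choose k).factorization p
      = #(filter (fun i => p ^ i ≤ k % p ^ i + (n - k) % p ^ i) (Ico 1 b)) := by
  have hfin : FiniteMultiplicity p (n.choose k) :=
    Nat.finiteMultiplicity_iff.2 ⟨hp.ne_one, Nat.choose_pos hkn⟩
  have h1 := hp.emultiplicity_choose hkn hnb
  rw [hfin.emultiplicity_eq_multiplicity,
    Nat.multiplicity_eq_factorization hp (Nat.choose_pos hkn).ne'] at h1
  exact_mod_cast h1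

theorem mod_sub_mod {m a c : ℕ} (hac : a ≤ c) (h : a % m ≤ c % m) :
    (c - a) % m = c % m - a % m := by
  rcases Nat.eq_zero_or_pos m with rfl | hm
  · simp
  have hc : c = a + (c - a) := (Nat.add_sub_cancel' hac).symm
  have h1 : (a % m + (c - a) % m) % m = c % m := by
    conv_rhs => rw [hc, Nat.add_mod]
  have hA : a % m < m := Nat.mod_lt _ hm
  have hB : (c - a) % m < m := Nat.mod_lt _ hm
  have hC : c % m < m := Nat.mod_lt _ hm
  rcases Nat.lt_or_ge (a % m + (c - a) % m) m with hlt | hge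
  · rw [Nat.mod_eq_of_lt hlt] at h1; omega
  · have h2 : (a % m + (c - a) % m) % m = a % m + (c - a) % m - m := by
      rw [Nat.mod_eq_sub_mod hge, Nat.mod_eq_of_lt (by omega)]
    omega


theorem no_carry_choose {p a c : ℕ} (hp : p.Prime) (hac : a ≤ c)
    (h : ∀ j, a % p ^ j ≤ c % p ^ j) : (c.choose a).factorization p = 0 := by
  rw [fact_choose hp hac (Nat.lt_succ_self _)]
  rw [Finset.card_eq_zero, Finset.filter_eq_empty_iff]
  intro i _
  rw [mod_sub_mod hac (h i)]
  have h2 : c % p ^ i < p ^ i := Nat.mod_lt _ (Nat.pow_pos hp.pos)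
  have h3 := h i
  omega

theorem mod_high {p M j : ℕ} (hp : p.Prime) (hM : M ≠ 0)
    (hj : M.factorization p < j) : p ^ M.factorization p ≤ M % p ^ j := by
  set α := M.factorization p with hα
  have h1 : p ^ α ∣ M % p ^ j := by
    have := Nat.ordProj_dvd M p
    exact (Nat.dvd_mod_iff (pow_dvd_pow p hj.le)).2 this
  have h2 : M % p ^ j ≠ 0 := by
    intro h0
    exact Nat.pow_succ_factorization_not_dvd hM hp
      (dvd_trans (pow_dvd_pow p hj) (Nat.dvd_of_mod_eq_zero h0))
  exact Nat.le_of_dvd (Nat.pos_of_ne_zero h2) h1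



theorem factB {p M β : ℕ} (hp : p.Prime) (hM : M ≠ 0) (hβα : β < M.factorization p) :
    (M.choose (p ^ β)).factorization p = M.factorization p - β := by
  set α := M.factorization p with hα
  have hαM : p ^ α ∣ M := Nat.ordProj_dvd M p
  have hpβα : p ^ β < p ^ α := Nat.pow_lt_pow_right hp.one_lt hβα
  have hβM : p ^ β ≤ M := le_trans hpβα.le (Nat.le_of_dvd (Nat.pos_of_ne_zero hM) hαM)
  have hlog : α ≤ Nat.log p M := (Nat.le_log_iff_pow_le hp.one_lt hM).2
    (Nat.le_of_dvd (Nat.pos_of_ne_zero hM) hαM)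
  rw [fact_choose hp hβM (Nat.lt_succ_self _)]
  have hset : (filter (fun i => p ^ i ≤ p ^ β % p ^ i + (M - p ^ β) % p ^ i)
      (Ico 1 (Nat.log p M + 1))) = Ico (β + 1) (α + 1) := by
    ext i
    simp only [Finset.mem_filter, Finset.mem_Ico]
    have hppos : (0:ℕ) < p ^ i := Nat.pow_pos hp.pos
    have hpβpos : (0:ℕ) < p ^ β := Nat.pow_pos hp.pos
    constructor
    · rintro ⟨⟨hi1, hib⟩, hcarry⟩
      constructor
      · by_contra hc
        push_neg at hc
        have h1 : p ^ β % p ^ i = 0 := Nat.mod_eq_zero_of_dvd (pow_dvd_pow p (by omega))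
        have h2 : (M - p ^ β) % p ^ i = 0 := Nat.mod_eq_zero_of_dvd
          (Nat.dvd_sub (dvd_trans (pow_dvd_pow p (le_trans (by omega : i ≤ β) hβα.le)) hαM)
            (pow_dvd_pow p (by omega)))
        omega
      · by_contra hc
        push_neg at hc
        have h1 : p ^ β % p ^ i = p ^ β :=
          Nat.mod_eq_of_lt (lt_of_lt_of_le hpβα (Nat.pow_le_pow_right hp.pos (by omega)))
        have h2 : p ^ β ≤ M % p ^ i := le_trans hpβα.le (mod_high hp hM (by omega))
        have h3 : (M - p ^ β) % p ^ i = M % p ^ i - p ^ β := by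
          have := mod_sub_mod (m := p ^ i) hβM (by rw [h1]; exact h2)
          rwa [h1] at this
        have h4 : M % p ^ i < p ^ i := Nat.mod_lt _ hppos
        omega
    · rintro ⟨hβi, hiα⟩
      have hiM : p ^ i ∣ M := dvd_trans (pow_dvd_pow p (by omega)) hαM
      have hiMle : p ^ i ≤ M := Nat.le_of_dvd (Nat.pos_of_ne_zero hM) hiM
      have h1 : p ^ β % p ^ i = p ^ β :=
        Nat.mod_eq_of_lt (Nat.pow_lt_pow_right hp.one_lt (by omega))
      have hpow : p ^ β < p ^ i := Nat.pow_lt_pow_right hp.one_lt (by omega)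
      have h2 : (M - p ^ β) % p ^ i = p ^ i - p ^ β := by
        have e1 : M - p ^ β = (M - p ^ i) + (p ^ i - p ^ β) := by omega
        rw [e1, Nat.add_mod, Nat.mod_eq_zero_of_dvd (Nat.dvd_sub hiM dvd_rfl), zero_add,
          Nat.mod_eq_of_lt (show p ^ i - p ^ β < p ^ i by omega), Nat.mod_eq_of_lt (by omega)]
      exact ⟨⟨by omega, by omega⟩, by omega⟩
  rw [hset, Nat.card_Ico]
  omega

theorem neg_mod {m c r : ℕ} (hr : 0 < r) (hrm : r ≤ m) (h : m ∣ c + r) : c % m = m - r := by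
  obtain ⟨t, ht⟩ := h
  rcases t with _ | u
  · omega
  · have hq : c = m * u + (m - r) := by
      have : m * (u + 1) = m * u + m := by ring
      omega
    rw [hq, Nat.mul_add_mod, Nat.mod_eq_of_lt (by omega)]

theorem caseB {p N k : ℕ} (hp : p.Prime) (hN : 2 ≤ N)
    (hβα : Nat.log p (N - 1) < (k + N).factorization p) :
    ∃ i ∈ Finset.Icc 1 (N - 1),
      ((Nat.choose (k + i - 1) (i - 1)) * (Nat.choose (k + N) (N - i))).factorization p
        = (k + N).factorization p - Nat.log p (N - 1) := by
  set M := k + N with hM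
  set α := M.factorization p with hα
  set β := Nat.log p (N - 1) with hβ
  have hM0 : M ≠ 0 := by omega
  have hβN : p ^ β ≤ N - 1 := Nat.pow_log_le_self p (by omega)
  have hβ1 : N - 1 < p ^ (β + 1) := Nat.lt_pow_succ_log_self hp.one_lt (N - 1)
  have h2β : p ^ β + 1 ≤ p ^ (β + 1) := by
    have h1 : 0 < p ^ β := Nat.pow_pos hp.pos
    have : p ^ (β + 1) = p ^ β * p := by ring
    nlinarith [hp.two_le]
  have hβα' : p ^ (β + 1) ≤ p ^ α := Nat.pow_le_pow_right hp.pos hβα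
  have hαM : p ^ α ∣ M := Nat.ordProj_dvd M p
  have hNα : N ≤ p ^ α := by omega
  refine ⟨N - p ^ β, ?_, ?_⟩
  · simp only [Finset.mem_Icc]
    have h1 : 0 < p ^ β := Nat.pow_pos hp.pos
    omega
  · have h1 : 0 < p ^ β := Nat.pow_pos hp.pos
    have hi1 : N - p ^ β - 1 = N - 1 - p ^ β := by omega
    have hi2 : N - (N - p ^ β) = p ^ β := by omega
    have hi3 : k + (N - p ^ β) - 1 = M - 1 - p ^ β := by omega
    rw [hi1, hi2, hi3]
    set s := N - 1 - p ^ β with hs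
    set c := M - 1 - p ^ β with hc
    have hsc : s ≤ c := by omega
    have hfac1 : (Nat.choose c s).factorization p = 0 := by
      apply no_carry_choose hp hsc
      intro j
      rcases le_or_gt j β with hjβ | hjβ
      · have hdvd : p ^ j ∣ c + 1 := by
          have he : c + 1 = M - p ^ β := by omega
          rw [he]
          exact Nat.dvd_sub (dvd_trans (pow_dvd_pow p (by omega)) hαM)
            (pow_dvd_pow p hjβ)
        rw [neg_mod (by omega) (Nat.pow_pos hp.pos) hdvd]
        have := Nat.mod_lt s (show 0 < p ^ j from Nat.pow_pos hp.pos)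
        omega
      · have hjβ1 : p ^ (β + 1) ≤ p ^ j := Nat.pow_le_pow_right hp.pos hjβ
        have hsmod : s % p ^ j = s := Nat.mod_eq_of_lt (by omega)
        rcases le_or_gt j α with hjα | hjα
        · have hcmod : c % p ^ j = p ^ j - (1 + p ^ β) := by
            apply neg_mod (by omega) (by omega)
            have he : c + (1 + p ^ β) = M := by omega
            rw [he]
            exact dvd_trans (pow_dvd_pow p hjα) hαM
          omega
        · have hMj : p ^ α ≤ M % p ^ j := mod_high hp hM0 (by omega)
          have hαj : p ^ α < p ^ j := Nat.pow_lt_pow_right hp.one_lt (by omega)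
          have hamod : (1 + p ^ β) % p ^ j = 1 + p ^ β := Nat.mod_eq_of_lt (by omega)
          have hcmod : c % p ^ j = M % p ^ j - (1 + p ^ β) := by
            have he : c = M - (1 + p ^ β) := by omega
            rw [he, mod_sub_mod (by omega) (by omega : (1 + p ^ β) % p ^ j ≤ M % p ^ j)]
            rw [hamod]
          omega
    have hfac2 : (Nat.choose M (p ^ β)).factorization p = α - β := factB hp hM0 hβα
    rw [Nat.factorization_mul (Nat.choose_pos hsc).ne'
      (Nat.choose_pos (by omega : p ^ β ≤ M)).ne']
    simp only [Finsupp.coe_add, Pi.add_apply]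
    rw [hfac1, hfac2]
    omega

theorem pred_mod' {m t : ℕ} (h : t % m ≠ 0) : (t - 1) % m = t % m - 1 := by
  rcases Nat.eq_zero_or_pos m with rfl | hm
  · simp at h ⊢
  have h1 := Nat.mod_add_div t m
  have h2 : t - 1 = (t % m - 1) + m * (t / m) := by omega
  rw [h2, Nat.add_mul_mod_self_left]
  exact Nat.mod_eq_of_lt (by have := Nat.mod_lt t hm; omega)


theorem exists_h {p k M : ℕ} (hp : p.Prime) (hkM : k < M) :
    ∃ h, k / p ^ h < M / p ^ h ∧ ∀ j, h < j → k / p ^ j = M / p ^ j := by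
  set B := Nat.log p M + 1 with hB
  set P : ℕ → Prop := fun j => k / p ^ j < M / p ^ j with hP
  have hP0 : P 0 := by simpa [hP] using hkM
  refine ⟨Nat.findGreatest P B, Nat.findGreatest_spec (Nat.zero_le B) hP0, ?_⟩
  intro j hj
  have hle : k / p ^ j ≤ M / p ^ j := Nat.div_le_div_right hkM.le
  rcases le_or_gt j B with hjB | hjB
  · have := Nat.findGreatest_is_greatest hj hjB
    simp only [hP, not_lt] at this
    omega
  · have hMB : M < p ^ j := by
      calc M < p ^ (Nat.log p M + 1) := Nat.lt_pow_succ_log_self hp.one_lt M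
      _ ≤ p ^ j := Nat.pow_le_pow_right hp.pos (by omega)
    rw [Nat.div_eq_of_lt (by omega), Nat.div_eq_of_lt hMB]

theorem existsT {p N k : ℕ} (hp : p.Prime) (hN : 2 ≤ N)
    (hαβ : (k + N).factorization p ≤ Nat.log p (N - 1)) :
    ∃ t, k < t ∧ t < k + N ∧ (∀ j, t % p ^ j ≤ (k + N) % p ^ j) ∧
      (∀ j, k % p ^ j ≤ (t - 1) % p ^ j) := by
  have hM0 : k + N ≠ 0 := by omega
  have hkM : k < k + N := by omega
  set M := k + N with hMdef
  have hβN : p ^ Nat.log p (N - 1) ≤ N - 1 := Nat.pow_log_le_self p (by omega)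
  have hαβ' : p ^ M.factorization p ≤ N - 1 :=
    le_trans (Nat.pow_le_pow_right hp.pos hαβ) hβN
  obtain ⟨h, hPh, hgt⟩ := exists_h hp hkM
  have hmod : ∀ j, h < j → M % p ^ j = k % p ^ j + N := by
    intro j hj
    have h1 := Nat.mod_add_div M (p ^ j)
    have h2 := Nat.mod_add_div k (p ^ j)
    rw [hgt j hj] at h2
    omega
  have hppos : ∀ j : ℕ, (0:ℕ) < p ^ j := fun j => Nat.pow_pos hp.pos
  rcases Nat.eq_zero_or_pos (M % p ^ h) with hMh | hMh
  · -- A2 : p^h ∣ M, use t = M - p^h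
    have hdvd : p ^ h ∣ M := Nat.dvd_of_mod_eq_zero hMh
    have hhα : h ≤ M.factorization p := (hp.pow_dvd_iff_le_factorization hM0).1 hdvd
    have hphN : p ^ h + 1 ≤ N := by
      have : p ^ h ≤ p ^ M.factorization p := Nat.pow_le_pow_right hp.pos hhα
      omega
    have hT : p ^ h ≤ M := Nat.le_of_dvd (by omega) hdvd
    refine ⟨M - p ^ h, by omega, by have := hppos h; omega, ?_, ?_⟩
    · intro j
      rcases le_or_gt j h with hjh | hjh
      · have he : (M - p ^ h) % p ^ j = M % p ^ j := by
          obtain ⟨u, hu⟩ : p ^ j ∣ p ^ h := pow_dvd_pow p hjh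
          rw [hu, Nat.sub_mul_mod (by omega)]
        omega
      · have hMj : M % p ^ j = k % p ^ j + N := hmod j hjh
        have hz1 : 0 ≤ k % p ^ j := Nat.zero_le _
        have hz2 : 0 ≤ M % p ^ j := Nat.zero_le _
        have hz3 : 0 ≤ (M - p ^ h) % p ^ j := Nat.zero_le _
        have hph : p ^ h % p ^ j = p ^ h :=
          Nat.mod_eq_of_lt (Nat.pow_lt_pow_right hp.one_lt hjh)
        have harg : p ^ h % p ^ j ≤ M % p ^ j := by omega
        have hsub := mod_sub_mod hT harg
        omega
    · intro j
      rcases le_or_gt j h with hjh | hjh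
      · have hdj : p ^ j ∣ M - p ^ h :=
          Nat.dvd_sub (dvd_trans (pow_dvd_pow p hjh) hdvd) (pow_dvd_pow p hjh)
        have he : (M - p ^ h - 1) % p ^ j = p ^ j - 1 := by
          apply neg_mod Nat.one_pos (hppos j)
          have he2 : M - p ^ h - 1 + 1 = M - p ^ h := by have := hppos h; omega
          rwa [he2]
        have := Nat.mod_lt k (hppos j)
        have hz1 : 0 ≤ k % p ^ j := Nat.zero_le _
        omega
      · have hMj : M % p ^ j = k % p ^ j + N := hmod j hjh
        have hz1 : 0 ≤ k % p ^ j := Nat.zero_le _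
        have hz2 : 0 ≤ M % p ^ j := Nat.zero_le _
        have hz3 : 0 ≤ (M - p ^ h) % p ^ j := Nat.zero_le _
        have hph : p ^ h % p ^ j = p ^ h :=
          Nat.mod_eq_of_lt (Nat.pow_lt_pow_right hp.one_lt hjh)
        have harg : p ^ h % p ^ j ≤ M % p ^ j := by omega
        have hsub := mod_sub_mod hT harg
        rw [hph] at hsub
        have hne : (M - p ^ h) % p ^ j ≠ 0 := by omega
        rw [pred_mod' hne]
        omega
  · -- A1 : M % p^h ≠ 0, use t = M - M % p^h
    have hqph : M % p ^ h < p ^ h := Nat.mod_lt M (hppos h)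
    have hqM : M % p ^ h ≤ M := Nat.mod_le M _
    have hqN : M % p ^ h < N := by
      have e1 : M % p ^ (h + 1) = M % p ^ h + p ^ h * (M / p ^ h % p) := Nat.mod_pow_succ
      have e2 : k % p ^ (h + 1) = k % p ^ h + p ^ h * (k / p ^ h % p) := Nat.mod_pow_succ
      have e3 : M % p ^ (h + 1) = k % p ^ (h + 1) + N := hmod (h + 1) (by omega)
      have e4 := Nat.div_add_mod (M / p ^ h) p
      have e5 := Nat.div_add_mod (k / p ^ h) p
      have e6 : M / p ^ h / p = k / p ^ h / p := by
        rw [Nat.div_div_eq_div_mul, Nat.div_div_eq_div_mul, ← pow_succ,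
          hgt (h + 1) (by omega)]
      have hAB : k / p ^ h % p + 1 ≤ M / p ^ h % p := by
        rw [e6] at e4
        omega
      have hmul : p ^ h * (k / p ^ h % p + 1) ≤ p ^ h * (M / p ^ h % p) :=
        Nat.mul_le_mul_left _ hAB
      have hmul2 : p ^ h * (k / p ^ h % p + 1) = p ^ h * (k / p ^ h % p) + p ^ h := by ring
      have hk : k % p ^ h < p ^ h := Nat.mod_lt k (hppos h)
      omega
    have htq : M - M % p ^ h = p ^ h * (M / p ^ h) := by
      have := Nat.mod_add_div M (p ^ h)
      omega
    refine ⟨M - M % p ^ h, by omega, by omega, ?_, ?_⟩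
    · intro j
      rcases le_or_gt j h with hjh | hjh
      · have hdj : p ^ j ∣ M - M % p ^ h :=
          htq ▸ dvd_mul_of_dvd_left (pow_dvd_pow p hjh) _
        have h0 : (M - M % p ^ h) % p ^ j = 0 := Nat.mod_eq_zero_of_dvd hdj
        have hz2 : 0 ≤ M % p ^ j := Nat.zero_le _
        omega
      · have hMj : M % p ^ j = k % p ^ j + N := hmod j hjh
        have hz1 : 0 ≤ k % p ^ j := Nat.zero_le _
        have hz2 : 0 ≤ M % p ^ j := Nat.zero_le _
        have hz3 : 0 ≤ (M - M % p ^ h) % p ^ j := Nat.zero_le _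
        have hz4 : 0 ≤ M % p ^ h % p ^ j := Nat.zero_le _
        have hqj : M % p ^ h % p ^ j = M % p ^ h :=
          Nat.mod_eq_of_lt (lt_of_lt_of_le hqph (Nat.pow_le_pow_right hp.pos hjh.le))
        have harg : M % p ^ h % p ^ j ≤ M % p ^ j := by omega
        have hsub := mod_sub_mod hqM harg
        omega
    · intro j
      rcases le_or_gt j h with hjh | hjh
      · have hdj : p ^ j ∣ M - M % p ^ h :=
          htq ▸ dvd_mul_of_dvd_left (pow_dvd_pow p hjh) _
        have he : (M - M % p ^ h - 1) % p ^ j = p ^ j - 1 := by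
          apply neg_mod Nat.one_pos (hppos j)
          have he2 : M - M % p ^ h - 1 + 1 = M - M % p ^ h := by omega
          rwa [he2]
        have := Nat.mod_lt k (hppos j)
        have hz1 : 0 ≤ k % p ^ j := Nat.zero_le _
        omega
      · have hMj : M % p ^ j = k % p ^ j + N := hmod j hjh
        have hz1 : 0 ≤ k % p ^ j := Nat.zero_le _
        have hz2 : 0 ≤ M % p ^ j := Nat.zero_le _
        have hz3 : 0 ≤ (M - M % p ^ h) % p ^ j := Nat.zero_le _
        have hz4 : 0 ≤ M % p ^ h % p ^ j := Nat.zero_le _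
        have hqj : M % p ^ h % p ^ j = M % p ^ h :=
          Nat.mod_eq_of_lt (lt_of_lt_of_le hqph (Nat.pow_le_pow_right hp.pos hjh.le))
        have harg : M % p ^ h % p ^ j ≤ M % p ^ j := by omega
        have hsub := mod_sub_mod hqM harg
        rw [hqj] at hsub
        have hne : (M - M % p ^ h) % p ^ j ≠ 0 := by omega
        rw [pred_mod' hne]
        omega

theorem caseA {p N k : ℕ} (hp : p.Prime) (hN : 2 ≤ N)
    (hαβ : (k + N).factorization p ≤ Nat.log p (N - 1)) :
    ∃ i ∈ Finset.Icc 1 (N - 1),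
      ((Nat.choose (k + i - 1) (i - 1)) * (Nat.choose (k + N) (N - i))).factorization p = 0 := by
  obtain ⟨t, hkt, htM, h1, h2⟩ := existsT hp hN hαβ
  refine ⟨t - k, by simp only [Finset.mem_Icc]; omega, ?_⟩
  have e1 : k + (t - k) - 1 = t - 1 := by omega
  have e2 : t - k - 1 = (t - 1) - k := by omega
  have e3 : N - (t - k) = (k + N) - t := by omega
  rw [e1, e2, e3]
  have hc1 : Nat.choose (t - 1) (t - 1 - k) = Nat.choose (t - 1) k :=
    Nat.choose_symm (by omega)
  have hc2 : Nat.choose (k + N) (k + N - t) = Nat.choose (k + N) t :=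
    Nat.choose_symm (by omega)
  rw [hc1, hc2]
  rw [Nat.factorization_mul (Nat.choose_pos (by omega : k ≤ t - 1)).ne'
    (Nat.choose_pos (by omega : t ≤ k + N)).ne']
  simp only [Finsupp.coe_add, Pi.add_apply]
  rw [no_carry_choose hp (by omega : k ≤ t - 1) h2,
    no_carry_choose hp (by omega : t ≤ k + N) h1]

theorem exists_good {p N k : ℕ} (hp : p.Prime) (hN : 2 ≤ N) :
    ∃ i ∈ Finset.Icc 1 (N - 1),
      ((Nat.choose (k + i - 1) (i - 1)) * (Nat.choose (k + N) (N - i))).factorization p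
        ≤ (k + N).factorization p
          - min ((k + N).factorization p) (Nat.log p (N - 1)) := by
  rcases le_or_gt ((k + N).factorization p) (Nat.log p (N - 1)) with hle | hlt
  · obtain ⟨i, hi, hv⟩ := caseA hp hN hle
    exact ⟨i, hi, by omega⟩
  · obtain ⟨i, hi, hv⟩ := caseB hp hN hlt
    refine ⟨i, hi, ?_⟩
    rw [hv]
    omega

theorem prod_fact (k N : ℕ) :
    k ! * ∏ j ∈ Finset.Icc 1 N, (k + j) = (k + N)! := by
  induction N with
  | zero => simp
  | succ n ih =>
    rw [Finset.prod_Icc_succ_top (by omega), ← mul_assoc, ih]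
    have : k + (n + 1) = (k + n) + 1 := by omega
    rw [this, Nat.factorial_succ]
    ring

theorem key_identity {N k i : ℕ} (hN : 2 ≤ N) (hi : i ∈ Finset.Icc 1 (N - 1)) :
    ∏ j ∈ (Finset.Icc 1 N).erase i, (k + j) =
      (Nat.choose (k + i - 1) (i - 1) * Nat.choose (k + N) (N - i))
        * ((i - 1)! * (N - i)!) := by
  simp only [Finset.mem_Icc] at hi
  have hiN : i ∈ Finset.Icc 1 N := by simp only [Finset.mem_Icc]; omega
  apply Nat.eq_of_mul_eq_mul_left
    (show 0 < k ! * (k + i) from Nat.mul_pos (Nat.factorial_pos k) (by omega))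
  have lhs : k ! * (k + i) * ∏ j ∈ (Finset.Icc 1 N).erase i, (k + j) = (k + N)! := by
    rw [mul_assoc, Finset.mul_prod_erase _ _ hiN, prod_fact]
  rw [lhs]
  symm
  have e1 : Nat.choose (k + i - 1) (i - 1) * (i - 1)! * k ! = (k + i - 1)! := by
    have h := Nat.choose_mul_factorial_mul_factorial (show i - 1 ≤ k + i - 1 by omega)
    have e : k + i - 1 - (i - 1) = k := by omega
    rwa [e] at h
  have e2 : Nat.choose (k + N) (N - i) * (N - i)! * (k + i)! = (k + N)! := by
    have h := Nat.choose_mul_factorial_mul_factorial (show N - i ≤ k + N by omega)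
    have e : k + N - (N - i) = k + i := by omega
    rwa [e] at h
  obtain ⟨a, ha⟩ : ∃ a, k + i = a + 1 := ⟨k + i - 1, by omega⟩
  have ha2 : k + i - 1 = a := by omega
  have e3 : (k + i - 1)! * (k + i) = (k + i)! := by
    rw [ha]
    simp [Nat.factorial_succ]
    ring
  calc k ! * (k + i) *
        (Nat.choose (k + i - 1) (i - 1) * Nat.choose (k + N) (N - i) * ((i - 1)! * (N - i)!))
      = (Nat.choose (k + i - 1) (i - 1) * (i - 1)! * k !) * (k + i)
          * (Nat.choose (k + N) (N - i) * (N - i)!) := by ring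
    _ = (k + i - 1)! * (k + i) * (Nat.choose (k + N) (N - i) * (N - i)!) := by rw [e1]
    _ = (k + i)! * (Nat.choose (k + N) (N - i) * (N - i)!) := by rw [e3]
    _ = Nat.choose (k + N) (N - i) * (N - i)! * (k + i)! := by ring
    _ = (k + N)! := e2

theorem a_div_eq {N k i : ℕ} (hN : 2 ≤ N) (hi : i ∈ Finset.Icc 1 (N - 1)) :
    (∏ j ∈ (Finset.Icc 1 N).erase i, (k + j)) / ((i - 1)! * (N - i)!)
      = Nat.choose (k + i - 1) (i - 1) * Nat.choose (k + N) (N - i) := by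
  rw [key_identity hN hi]
  exact Nat.mul_div_cancel _ (Nat.mul_pos (Nat.factorial_pos _) (Nat.factorial_pos _))

theorem div_dvd_div' {a b c : ℕ} (hab : a ∣ b) (hbc : b ∣ c) : c / b ∣ c / a := by
  rcases Nat.eq_zero_or_pos a with rfl | ha
  · have hb : b = 0 := Nat.eq_zero_of_zero_dvd hab
    subst hb
    have : c = 0 := Nat.eq_zero_of_zero_dvd hbc
    subst this
    simp
  rcases Nat.eq_zero_or_pos b with rfl | hb
  · have : c = 0 := Nat.eq_zero_of_zero_dvd hbc
    subst this
    simp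
  obtain ⟨x, hx⟩ := hab
  obtain ⟨y, hy⟩ := hbc
  have h1 : c / b = y := by rw [hy, Nat.mul_div_cancel_left _ hb]
  have h2 : c / a = x * y := by
    rw [hy, hx, mul_assoc, Nat.mul_div_cancel_left _ ha]
  rw [h1, h2]
  exact dvd_mul_left y x

theorem div_gcd_dvd_choose_s2 {M q : ℕ} (hq : 1 ≤ q) (hqM : q ≤ M) :
    M / Nat.gcd M q ∣ Nat.choose M q := by
  have hg0 : 0 < Nat.gcd M q := Nat.gcd_pos_of_pos_left q (by omega)
  have hid : Nat.choose M q * q = M * Nat.choose (M - 1) (q - 1) := by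
    have h := Nat.add_one_mul_choose_eq (M - 1) (q - 1)
    have e1 : M - 1 + 1 = M := by omega
    have e2 : q - 1 + 1 = q := by omega
    rw [e1, e2] at h
    omega
  have hM' : M / Nat.gcd M q * Nat.gcd M q = M := Nat.div_mul_cancel (Nat.gcd_dvd_left M q)
  have hq' : q / Nat.gcd M q * Nat.gcd M q = q := Nat.div_mul_cancel (Nat.gcd_dvd_right M q)
  have hcop : Nat.Coprime (M / Nat.gcd M q) (q / Nat.gcd M q) :=
    Nat.coprime_div_gcd_div_gcd hg0
  apply hcop.dvd_of_dvd_mul_right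
  have hkey : (Nat.choose M q * (q / Nat.gcd M q)) * Nat.gcd M q
      = (M / Nat.gcd M q * Nat.choose (M - 1) (q - 1)) * Nat.gcd M q := by
    calc (Nat.choose M q * (q / Nat.gcd M q)) * Nat.gcd M q
        = Nat.choose M q * (q / Nat.gcd M q * Nat.gcd M q) := by ring
      _ = Nat.choose M q * q := by rw [hq']
      _ = M * Nat.choose (M - 1) (q - 1) := hid
      _ = (M / Nat.gcd M q * Nat.gcd M q) * Nat.choose (M - 1) (q - 1) := by rw [hM']
      _ = (M / Nat.gcd M q * Nat.choose (M - 1) (q - 1)) * Nat.gcd M q := by ring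
  exact ⟨Nat.choose (M - 1) (q - 1), Nat.eq_of_mul_eq_mul_right hg0 hkey⟩

theorem lcm_ne_zero_fin (s : Finset ℕ) (h0 : ∀ i ∈ s, i ≠ 0) : s.lcm id ≠ 0 := by
  induction s using Finset.induction_on with
  | empty => simp
  | @insert a s ha ih =>
    rw [Finset.lcm_insert]
    have ha0 : a ≠ 0 := h0 a (Finset.mem_insert_self a s)
    have hs0 : s.lcm id ≠ 0 := ih (fun i hi => h0 i (Finset.mem_insert_of_mem hi))
    exact Nat.lcm_ne_zero ha0 hs0

theorem lcm_fact_le {p c : ℕ} (s : Finset ℕ) (h0 : ∀ i ∈ s, i ≠ 0)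
    (h : ∀ i ∈ s, i.factorization p ≤ c) : (s.lcm id).factorization p ≤ c := by
  induction s using Finset.induction_on with
  | empty => simp
  | @insert a s ha ih =>
    rw [Finset.lcm_insert]
    have ha0 : a ≠ 0 := h0 a (Finset.mem_insert_self a s)
    have hs0 : s.lcm id ≠ 0 := lcm_ne_zero_fin s (fun i hi => h0 i (Finset.mem_insert_of_mem hi))
    rw [lcm_eq_nat_lcm, Nat.factorization_lcm (by simpa using ha0) hs0]
    rw [Finsupp.sup_apply]
    exact sup_le (h a (Finset.mem_insert_self a s))
      (ih (fun i hi => h0 i (Finset.mem_insert_of_mem hi))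
        (fun i hi => h i (Finset.mem_insert_of_mem hi)))

/-- For all integers `N ≥ 2` and `k ≥ 0`, the greatest common divisor of
the integers `a_1, …, a_{N-1}`, where `a_i = (∏_{j=1, j≠i}^{N} (k+j)) / ((i-1)! * (N-i)!)`,
equals `x = (k+N) / gcd(k+N, lcm(1,…,N-1))`. -/
theorem gcd_ai_eq_x (N k : ℕ) (hN : 2 ≤ N) :
    Finset.gcd (Finset.Icc 1 (N - 1)) (fun i =>
      (∏ j ∈ (Finset.Icc 1 N).erase i, (k + j)) /
        (Nat.factorial (i - 1) * Nat.factorial (N - i)))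
    = (k + N) / Nat.gcd (k + N) ((Finset.Icc 1 (N - 1)).lcm id) := by
  classical
  have hM0 : k + N ≠ 0 := by omega
  have hN10 : N - 1 ≠ 0 := by omega
  have h1N : (1 : ℕ) ∈ Finset.Icc 1 (N - 1) := by
    simp only [Finset.mem_Icc]; omega
  rw [Finset.gcd_congr rfl (fun i hi => a_div_eq hN hi)]
  set L := (Finset.Icc 1 (N - 1)).lcm id with hLdef
  have hLne : L ≠ 0 := lcm_ne_zero_fin _ (by
    intro i hi
    simp only [Finset.mem_Icc] at hi
    omega)
  have hDdvd : Nat.gcd (k + N) L ∣ k + N := Nat.gcd_dvd_left _ _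
  have hD0 : 0 < Nat.gcd (k + N) L := Nat.gcd_pos_of_pos_left _ (by omega)
  have hx0 : (k + N) / Nat.gcd (k + N) L ≠ 0 :=
    (Nat.div_pos (Nat.le_of_dvd (by omega) hDdvd) hD0).ne'
  set g := Finset.gcd (Finset.Icc 1 (N - 1)) (fun i =>
      Nat.choose (k + i - 1) (i - 1) * Nat.choose (k + N) (N - i)) with hgdef
  have hfpos : ∀ i ∈ Finset.Icc 1 (N - 1),
      0 < Nat.choose (k + i - 1) (i - 1) * Nat.choose (k + N) (N - i) := by
    intro i hi
    simp only [Finset.mem_Icc] at hi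
    exact Nat.mul_pos (Nat.choose_pos (by omega)) (Nat.choose_pos (by omega))
  have hg0 : g ≠ 0 := by
    intro h0
    have := (Finset.gcd_eq_zero_iff.1 h0) 1 h1N
    have := hfpos 1 h1N
    omega
  apply Nat.dvd_antisymm
  · -- g ∣ x
    rw [← Nat.factorization_le_iff_dvd hg0 hx0, Finsupp.le_def]
    intro p
    by_cases hp : p.Prime
    · obtain ⟨i, hi, hvi⟩ := exists_good (p := p) (k := k) hp hN
      have hfi0 : Nat.choose (k + i - 1) (i - 1) * Nat.choose (k + N) (N - i) ≠ 0 :=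
        (hfpos i hi).ne'
      have hgle : g.factorization p
          ≤ (Nat.choose (k + i - 1) (i - 1) * Nat.choose (k + N) (N - i)).factorization p :=
        Finsupp.le_def.1 ((Nat.factorization_le_iff_dvd hg0 hfi0).2 (Finset.gcd_dvd hi)) p
      have hLβ : L.factorization p = Nat.log p (N - 1) := by
        apply le_antisymm
        · apply lcm_fact_le
          · intro i hi
            simp only [Finset.mem_Icc] at hi
            omega
          · intro i hi
            simp only [Finset.mem_Icc] at hi
            have hd : p ^ (i.factorization p) ∣ i := Nat.ordProj_dvd i p
            have : p ^ (i.factorization p) ≤ N - 1 :=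
              le_trans (Nat.le_of_dvd (by omega) hd) (by omega)
            exact (Nat.le_log_iff_pow_le hp.one_lt hN10).2 this
        · have hmem : p ^ Nat.log p (N - 1) ∈ Finset.Icc 1 (N - 1) := by
            simp only [Finset.mem_Icc]
            exact ⟨Nat.pow_pos hp.pos, Nat.pow_log_le_self p hN10⟩
          have : p ^ Nat.log p (N - 1) ∣ L := Finset.dvd_lcm hmem
          exact (hp.pow_dvd_iff_le_factorization hLne).1 this
      have hxfac : ((k + N) / Nat.gcd (k + N) L).factorization p
          = (k + N).factorization p
            - min ((k + N).factorization p) (Nat.log p (N - 1)) := by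
        rw [Nat.factorization_div hDdvd]
        have hgcdfac : (Nat.gcd (k + N) L).factorization p
            = min ((k + N).factorization p) (L.factorization p) := by
          rw [Nat.factorization_gcd hM0 hLne, Finsupp.inf_apply]
        simp only [Finsupp.tsub_apply, Pi.sub_apply]
        rw [hgcdfac, hLβ]
      rw [hxfac]
      omega
    · simp [Nat.factorization_eq_zero_of_not_prime _ hp]
  · -- x ∣ g
    apply Finset.dvd_gcd
    intro i hi
    simp only [Finset.mem_Icc] at hi
    have hqmem : N - i ∈ Finset.Icc 1 (N - 1) := by
      simp only [Finset.mem_Icc]; omega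
    have h1 : Nat.gcd (k + N) (N - i) ∣ Nat.gcd (k + N) L :=
      Nat.dvd_gcd (Nat.gcd_dvd_left _ _)
        ((Nat.gcd_dvd_right _ _).trans (Finset.dvd_lcm hqmem))
    have h2 : (k + N) / Nat.gcd (k + N) L ∣ (k + N) / Nat.gcd (k + N) (N - i) :=
      div_dvd_div' h1 hDdvd
    have h3 : (k + N) / Nat.gcd (k + N) (N - i) ∣ Nat.choose (k + N) (N - i) :=
      div_gcd_dvd_choose_s2 (by omega) (by omega)
    exact (h2.trans h3).mul_left _
end

section
/- For all integers N ≥ 2, k ≥ 0, and i with 1 ≤ i ≤ N−1, the factorial (N−1)! divides lcm(1,2,…,N−1) · ∏_{j=1, j≠i}^{N−1} (k+j). Equivalently, the integer b(N−1) := (N−1)!/lcm(1,2,…,N−1) divides the product ∏_{j=1, j≠i}^{N−1} (k+j) of k+1, …, k+N−1 with the factor k+i omitted. -/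
open Finset Nat

/-- Core lemma: for each prime `p`, `v_p(k+i) ≤ v_p(lcm(1..n)) + v_p(C(k+n,n))`. -/
lemma factorization_le_aux (p n k i : ℕ) (hp : p.Prime) (hi1 : 1 ≤ i) (hi2 : i ≤ n) :
    (k + i).factorization p ≤
      ((Finset.Icc 1 n).lcm id).factorization p + ((k + n).choose n).factorization p := by
  haveI : Fact p.Prime := ⟨hp⟩
  have hn1 : 1 ≤ n := le_trans hi1 hi2
  have hki : k + i ≠ 0 := by omega
  set a := (k + i).factorization p with ha
  set L := Nat.log p n with hL
  have hlcm_dvd' : (Finset.Icc 1 n).lcm id ∣ n.factorial :=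
    Finset.lcm_dvd fun x hx => Nat.dvd_factorial (Finset.mem_Icc.mp hx).1 (Finset.mem_Icc.mp hx).2
  have hlcm_ne : (Finset.Icc 1 n).lcm id ≠ 0 := by
    intro h
    rw [h] at hlcm_dvd'
    exact n.factorial_ne_zero (Nat.eq_zero_of_zero_dvd hlcm_dvd')
  -- p^(min a L) divides lcm
  have hpowmem : ∀ m : ℕ, p ^ m ≤ n → m ≤ ((Finset.Icc 1 n).lcm id).factorization p := by
    intro m hm
    have hmem : p ^ m ∈ Finset.Icc 1 n := by
      rw [Finset.mem_Icc]
      exact ⟨Nat.one_le_pow _ _ hp.pos, hm⟩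
    have hdvd : p ^ m ∣ (Finset.Icc 1 n).lcm id := Finset.dvd_lcm hmem
    exact (Nat.Prime.pow_dvd_iff_le_factorization hp hlcm_ne).mp hdvd
  by_cases hcase : a ≤ L
  · -- p^a ≤ p^L ≤ n
    have h1 : p ^ a ≤ n := le_trans (Nat.pow_le_pow_right hp.pos hcase)
      (Nat.pow_log_le_self p (by omega))
    exact le_trans (hpowmem a h1) (Nat.le_add_right _ _)
  · push_neg at hcase
    have hLle : L ≤ ((Finset.Icc 1 n).lcm id).factorization p :=
      hpowmem L (Nat.pow_log_le_self p (by omega))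
    -- show a - L ≤ v_p(choose (k+n) n)
    set b := max a (Nat.log p (k + n)) + 1 with hb
    have hnb : Nat.log p (k + n) < b := by omega
    have hval : padicValNat p ((k + n).choose n) =
        ((Finset.Ico 1 b).filter fun j => p ^ j ≤ n % p ^ j + k % p ^ j).card :=
      padicValNat_choose' hnb
    have hsub : Finset.Ioc L a ⊆
        (Finset.Ico 1 b).filter fun j => p ^ j ≤ n % p ^ j + k % p ^ j := by
      intro j hj
      rw [Finset.mem_Ioc] at hj
      obtain ⟨hj1, hj2⟩ := hj
      have hjb : j < b := by omega
      have hnlt : n < p ^ j := by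
        calc n < p ^ (L + 1) := Nat.lt_pow_succ_log_self hp.one_lt n
        _ ≤ p ^ j := Nat.pow_le_pow_right hp.pos (by omega)
      have hilt : i < p ^ j := lt_of_le_of_lt hi2 hnlt
      -- p^j divides k + i
      have hpj : p ^ j ∣ k + i := dvd_trans (pow_dvd_pow p hj2) (Nat.ordProj_dvd (k + i) p)
      -- k % p^j + i ≥ p^j
      have h1 : p ^ j ∣ k % p ^ j + i := by
        have h2 : k % p ^ j + i ≡ 0 [MOD p ^ j] :=
          ((Nat.mod_modEq k (p ^ j)).add_right i).trans (Nat.modEq_zero_iff_dvd.mpr hpj)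
        exact Nat.modEq_zero_iff_dvd.mp h2
      have hq : 0 < p ^ j := Nat.pow_pos hp.pos
      have h3 : 0 < k % p ^ j + i := Nat.add_pos_right _ hi1
      have h5 : p ^ j ≤ k % p ^ j + i := Nat.le_of_dvd h3 h1
      rw [Finset.mem_filter, Finset.mem_Ico]
      refine ⟨⟨by omega, hjb⟩, ?_⟩
      rw [Nat.mod_eq_of_lt hnlt]
      omega
    have hcard : a - L ≤ ((Finset.Ico 1 b).filter
        fun j => p ^ j ≤ n % p ^ j + k % p ^ j).card := by
      calc a - L = (Finset.Ioc L a).card := (Nat.card_Ioc L a).symm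
      _ ≤ _ := Finset.card_le_card hsub
    have hchoose : a - L ≤ ((k + n).choose n).factorization p := by
      rw [Nat.factorization_def _ hp, hval]; exact hcard
    omega

lemma key_dvd (n k i : ℕ) (hi1 : 1 ≤ i) (hi2 : i ≤ n) :
    (k + i) ∣ ((Finset.Icc 1 n).lcm id) * (k + n).choose n := by
  have hn1 : 1 ≤ n := le_trans hi1 hi2
  have hlcm_dvd' : (Finset.Icc 1 n).lcm id ∣ n.factorial :=
    Finset.lcm_dvd fun x hx => Nat.dvd_factorial (Finset.mem_Icc.mp hx).1 (Finset.mem_Icc.mp hx).2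
  have hlcm_ne : (Finset.Icc 1 n).lcm id ≠ 0 := by
    intro h
    rw [h] at hlcm_dvd'
    exact n.factorial_ne_zero (Nat.eq_zero_of_zero_dvd hlcm_dvd')
  have hch_ne : (k + n).choose n ≠ 0 :=
    (Nat.choose_pos (Nat.le_add_left n k)).ne'
  rw [← Nat.factorization_le_iff_dvd (by omega) (mul_ne_zero hlcm_ne hch_ne)]
  intro p
  by_cases hp : p.Prime
  · rw [Nat.factorization_mul hlcm_ne hch_ne]
    exact factorization_le_aux p n k i hp hi1 hi2
  · simp [Nat.factorization_eq_zero_of_not_prime _ hp]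

lemma prod_Icc_eq (n k : ℕ) :
    ∏ j ∈ Finset.Icc 1 n, (k + j) = n.factorial * (k + n).choose n := by
  induction n with
  | zero => simp
  | succ m ih =>
    rw [Finset.prod_Icc_succ_top (by omega), ih, Nat.factorial_succ]
    have : (k + (m + 1)) * ((k + m + 1).choose (m + 1) * (m + 1)) =
        (m + 1) * ((k + (m + 1)) * (k + m + 1).choose (m + 1)) := by ring
    have hsucc : (k + m + 1) * (k + m).choose m = (k + m + 1).choose (m + 1) * (m + 1) :=
      Nat.add_one_mul_choose_eq (k + m) m
    calc m.factorial * (k + m).choose m * (k + (m + 1))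
        = m.factorial * ((k + m + 1) * (k + m).choose m) := by ring_nf
      _ = m.factorial * ((k + m + 1).choose (m + 1) * (m + 1)) := by rw [hsucc]
      _ = (m + 1) * m.factorial * (k + (m + 1)).choose (m + 1) := by
          rw [show k + (m + 1) = k + m + 1 by ring]; ring

/-- For all integers `N ≥ 2`, `k ≥ 0`, and `i` with `1 ≤ i ≤ N-1`,
the factorial `(N-1)!` divides `lcm(1,…,N-1) * ∏_{j=1, j≠i}^{N-1} (k+j)`; equivalently,
`b(N-1) = (N-1)! / lcm(1,…,N-1)` divides `∏_{j=1, j≠i}^{N-1} (k+j)`. -/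
theorem factorial_dvd_lcm_mul_prod (N k i : ℕ) (hN : 2 ≤ N) (hi1 : 1 ≤ i) (hi2 : i ≤ N - 1) :
    (Nat.factorial (N - 1) ∣
      ((Finset.Icc 1 (N - 1)).lcm id) * ∏ j ∈ (Finset.Icc 1 (N - 1)).erase i, (k + j)) ∧
    (Nat.factorial (N - 1) / ((Finset.Icc 1 (N - 1)).lcm id) ∣
      ∏ j ∈ (Finset.Icc 1 (N - 1)).erase i, (k + j)) := by
  set n := N - 1 with hn
  have hn1 : 1 ≤ n := by omega
  set P := ∏ j ∈ (Finset.Icc 1 n).erase i, (k + j) with hP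
  set Lc := (Finset.Icc 1 n).lcm id with hLc
  have himem : i ∈ Finset.Icc 1 n := by simp [Finset.mem_Icc, hi1, hi2]
  have hfull : (k + i) * P = n.factorial * (k + n).choose n := by
    rw [hP, Finset.mul_prod_erase _ _ himem, prod_Icc_eq]
  have hlcm_dvd : Lc ∣ n.factorial := by
    apply Finset.lcm_dvd
    intro x hx
    rw [Finset.mem_Icc] at hx
    exact Nat.dvd_factorial hx.1 hx.2
  have hlcm_ne : Lc ≠ 0 := by
    intro h
    rw [h] at hlcm_dvd
    have := Nat.eq_zero_of_zero_dvd hlcm_dvd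
    exact absurd this n.factorial_ne_zero
  obtain ⟨t, ht⟩ := key_dvd n k i hi1 hi2
  obtain ⟨b, hbeq⟩ := hlcm_dvd
  have hki : 0 < k + i := by omega
  -- lcm * P = n! * t
  have hmain : Lc * P = n.factorial * t := by
    have h1 : (k + i) * (Lc * P) = (k + i) * (n.factorial * t) := by
      calc (k + i) * (Lc * P) = Lc * ((k + i) * P) := by ring
        _ = Lc * (n.factorial * (k + n).choose n) := by rw [hfull]
        _ = n.factorial * (Lc * (k + n).choose n) := by ring
        _ = n.factorial * ((k + i) * t) := by rw [← ht]
        _ = (k + i) * (n.factorial * t) := by ring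
    exact Nat.eq_of_mul_eq_mul_left hki h1
  constructor
  · exact ⟨t, hmain⟩
  · have hPbt : P = b * t := by
      have h1 : Lc * P = Lc * (b * t) := by
        rw [hmain, hbeq]; ring
      exact Nat.eq_of_mul_eq_mul_left (Nat.pos_of_ne_zero hlcm_ne) h1
    have hdiv : n.factorial / Lc = b := by
      rw [hbeq]; exact Nat.mul_div_cancel_left b (Nat.pos_of_ne_zero hlcm_ne)
    rw [hdiv, hPbt]
    exact Dvd.intro t rfl
end

section
/- For all integers N ≥ 2, k ≥ 0, and i with 1 ≤ i ≤ N−1, the Weyl dimension products satisfy the identity WD((k, 0, …, 0)) · WD((1, …, 1, 0, …, 0)) = WD((k+1, 1, …, 1, 0, …, 0)) + WD((k, 1, …, 1, 0, …, 0)), where on the left the second tuple has i entries equal to 1 followed by N−i zeros, and on the right the first tuple has i−1 entries equal to 1 after the leading k+1 followed by N−i zeros, and the second tuple has i entries equal to 1 after the leading k followed by N−1−i zeros. (This expresses that the tensor product of the su(N)-representations with highest weights kω_1 and ω_i decomposes into the two irreducible representations with highest weights kω_1 + ω_i and (k−1)ω_1 + ω_{i+1}.) -/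
/-- The Weyl dimension product of a tuple `ℓ = (ℓ_1, …, ℓ_N)` of integers:
`WD(ℓ) = ∏_{1 ≤ r < s ≤ N} (ℓ_r - ℓ_s + s - r) / (s - r)` as a rational number. -/
def weylDim (N : ℕ) (ℓ : Fin N → ℤ) : ℚ :=
  ∏ r : Fin N, ∏ s : Fin N,
    if (r : ℕ) < (s : ℕ) then
      ((ℓ r - ℓ s + ((s : ℕ) : ℤ) - ((r : ℕ) : ℤ) : ℤ) : ℚ) / (((s : ℕ) - (r : ℕ) : ℕ) : ℚ)
    else 1

open Finset

lemma weylDim_eq_prod (N : ℕ) (ℓ : Fin N → ℤ) (g : ℕ → ℤ) (hg : ∀ j : Fin N, ℓ j = g j) :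
    weylDim N ℓ = ∏ r ∈ range N, ∏ s ∈ Ico (r+1) N,
      ((g r - g s + s - r : ℤ) : ℚ) / ((s : ℚ) - (r : ℚ)) := by
  unfold weylDim
  simp only [hg]
  rw [Fin.prod_univ_eq_prod_range (fun r => ∏ s : Fin N,
    if r < (s : ℕ) then ((g r - g s + ((s:ℕ):ℤ) - (r:ℤ) : ℤ) : ℚ) / (((s:ℕ) - r : ℕ) : ℚ) else 1) N]
  refine Finset.prod_congr rfl fun r hr => ?_
  simp only [mem_range] at hr
  rw [Fin.prod_univ_eq_prod_range (fun s =>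
    if r < s then ((g r - g s + (s:ℤ) - (r:ℤ) : ℤ) : ℚ) / ((s - r : ℕ) : ℚ) else 1) N]
  rw [← Finset.prod_filter]
  have : (range N).filter (fun s => r < s) = Ico (r+1) N := by
    ext x; simp; omega
  rw [this]
  refine Finset.prod_congr rfl fun s hs => ?_
  simp only [mem_Ico] at hs
  have hrs : r ≤ s := by omega
  rw [Nat.cast_sub hrs]


lemma div_self_sub (r s : ℕ) (h : r < s) : ((s:ℚ) - r)/((s:ℚ) - r) = 1 := by
  have : (r:ℚ) < s := by exact_mod_cast h
  exact div_self (by intro hh; linarith)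


lemma telescope (a b : ℕ) (hab : a ≤ b) (f : ℕ → ℚ) (hf : ∀ s, a ≤ s → s ≤ b → f s ≠ 0) :
    ∏ s ∈ Ico a b, (f (s+1) / f s) = f b / f a := by
  induction b, hab using Nat.le_induction with
  | base => simp [div_self (hf a le_rfl le_rfl)]
  | succ b hab ih =>
    rw [Finset.prod_Ico_succ_top hab, ih (fun s h1 h2 => hf s h1 (by omega))]
    have hb := hf b hab (by omega)
    have ha := hf a le_rfl (by omega)
    field_simp


lemma tel_sub (r a b : ℕ) (hra : r < a) (hab : a ≤ b) :
    ∏ s ∈ Ico a b, (((s:ℚ) + 1 - r) / ((s:ℚ) - r)) = ((b:ℚ) - r)/((a:ℚ) - r) := by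
  have hf : ∀ s, a ≤ s → s ≤ b → ((s:ℚ) - r) ≠ 0 := by
    intro s h1 _
    have : (r:ℚ) < s := by exact_mod_cast lt_of_lt_of_le hra h1
    intro h; linarith
  rw [← telescope a b hab (fun s => (s:ℚ) - r) hf]
  exact prod_congr rfl fun s hs => by push_cast; ring_nf


lemma prod_Ico_shift (a b : ℕ) (h : ℕ → ℚ) :
    ∏ s ∈ Ico (a+1) (b+1), h s = ∏ s ∈ Ico a b, h (s+1) := by
  rw [Finset.prod_Ico_eq_prod_range, Finset.prod_Ico_eq_prod_range]
  simp only [Nat.succ_sub_succ]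
  exact Finset.prod_congr rfl fun x _ => by rw [show a+1+x = a+x+1 from by omega]


lemma evalA (N k : ℕ) (hN : 0 < N) :
    weylDim N (fun j => if (j : ℕ) = 0 then (k : ℤ) else 0)
      = ∏ s ∈ Ico 1 N, (((k:ℚ) + s) / s) := by
  rw [weylDim_eq_prod N _ (fun n => if n = 0 then (k:ℤ) else 0) (fun j => rfl)]
  rw [Finset.range_eq_Ico, Finset.prod_eq_prod_Ico_succ_bot hN]
  have htail : ∏ r ∈ Ico (0+1) N, (∏ s ∈ Ico (r+1) N,
      (((if r = 0 then (k:ℤ) else 0) - (if s = 0 then (k:ℤ) else 0) + s - r : ℤ) : ℚ)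
        / ((s : ℚ) - (r : ℚ))) = 1 := by
    refine Finset.prod_eq_one fun r hr => Finset.prod_eq_one fun s hs => ?_
    simp only [mem_Ico] at hr hs
    rw [if_neg (by omega), if_neg (by omega)]
    have h1 : ((0 - 0 + s - r : ℤ) : ℚ) = (s:ℚ) - r := by push_cast; ring
    rw [h1, div_self_sub r s (by omega)]
  rw [htail, mul_one]
  refine Finset.prod_congr rfl fun s hs => ?_
  simp only [mem_Ico] at hs
  rw [if_pos rfl, if_neg (by omega)]
  push_cast
  ring_nf

lemma evalB (N i : ℕ) (hi : 0 < i) (hiN : i ≤ N) :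
    weylDim N (fun j => if (j : ℕ) < i then 1 else 0)
      = ∏ r ∈ range i, (((N:ℚ) - r) / ((i:ℚ) - r)) := by
  rw [weylDim_eq_prod N _ (fun n => if n < i then (1:ℤ) else 0) (fun j => rfl)]
  rw [Finset.range_eq_Ico, ← Finset.prod_Ico_consecutive _ (Nat.zero_le i) hiN]
  have htail : ∏ r ∈ Ico i N, (∏ s ∈ Ico (r+1) N,
      (((if r < i then (1:ℤ) else 0) - (if s < i then (1:ℤ) else 0) + s - r : ℤ) : ℚ)
        / ((s : ℚ) - (r : ℚ))) = 1 := by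
    refine Finset.prod_eq_one fun r hr => Finset.prod_eq_one fun s hs => ?_
    simp only [mem_Ico] at hr hs
    rw [if_neg (by omega), if_neg (by omega)]
    have h1 : ((0 - 0 + s - r : ℤ) : ℚ) = (s:ℚ) - r := by push_cast; ring
    rw [h1, div_self_sub r s (by omega)]
  rw [htail, mul_one, ← Finset.range_eq_Ico]
  refine Finset.prod_congr rfl fun r hr => ?_
  simp only [mem_range] at hr
  rw [← Finset.prod_Ico_consecutive _ (show r+1 ≤ i from by omega) hiN]
  have h1 : ∏ s ∈ Ico (r+1) i, (((if r < i then (1:ℤ) else 0) - (if s < i then (1:ℤ) else 0) + s - r : ℤ) : ℚ)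
        / ((s : ℚ) - (r : ℚ)) = 1 := by
    refine Finset.prod_eq_one fun s hs => ?_
    simp only [mem_Ico] at hs
    rw [if_pos hr, if_pos (by omega)]
    have h1 : ((1 - 1 + s - r : ℤ) : ℚ) = (s:ℚ) - r := by push_cast; ring
    rw [h1, div_self_sub r s (by omega)]
  rw [h1, one_mul, ← tel_sub r i N hr hiN]
  refine Finset.prod_congr rfl fun s hs => ?_
  simp only [mem_Ico] at hs
  rw [if_pos hr, if_neg (by omega)]
  push_cast
  ring_nf

lemma evalC (N k i : ℕ) (hi : 1 ≤ i) (hiN : i ≤ N) :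
    weylDim N (fun j => if (j : ℕ) = 0 then (k : ℤ) + 1 else if (j : ℕ) < i then 1 else 0)
      = (∏ s ∈ Ico 1 i, (((k:ℚ) + s) / s)) * (∏ s ∈ Ico i N, (((k:ℚ) + 1 + s) / s))
        * (∏ r ∈ Ico 1 i, (((N:ℚ) - r) / ((i:ℚ) - r))) := by
  rw [weylDim_eq_prod N _ (fun n => if n = 0 then (k:ℤ) + 1 else if n < i then 1 else 0)
    (fun j => rfl)]
  rw [Finset.range_eq_Ico, Finset.prod_eq_prod_Ico_succ_bot (show 0 < N by omega)]
  have hhead : ∏ s ∈ Ico (0+1) N,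
      (((if (0:ℕ) = 0 then (k:ℤ) + 1 else if 0 < i then 1 else 0)
          - (if s = 0 then (k:ℤ) + 1 else if s < i then 1 else 0) + (s:ℤ) - ((0:ℕ):ℤ) : ℤ) : ℚ)
        / ((s : ℚ) - ((0:ℕ) : ℚ))
      = (∏ s ∈ Ico 1 i, (((k:ℚ) + s) / s)) * (∏ s ∈ Ico i N, (((k:ℚ) + 1 + s) / s)) := by
    rw [← Finset.prod_Ico_consecutive _ hi hiN]
    congr 1
    · refine Finset.prod_congr rfl fun s hs => ?_
      simp only [mem_Ico] at hs
      rw [if_pos rfl, if_neg (by omega), if_pos (by omega)]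
      push_cast; ring_nf
    · refine Finset.prod_congr rfl fun s hs => ?_
      simp only [mem_Ico] at hs
      rw [if_pos rfl, if_neg (by omega), if_neg (by omega)]
      push_cast; ring_nf
  have htail : ∏ r ∈ Ico (0+1) N, (∏ s ∈ Ico (r+1) N,
      (((if r = 0 then (k:ℤ) + 1 else if r < i then 1 else 0)
          - (if s = 0 then (k:ℤ) + 1 else if s < i then 1 else 0) + s - r : ℤ) : ℚ)
        / ((s : ℚ) - (r : ℚ)))
      = ∏ r ∈ Ico 1 i, (((N:ℚ) - r) / ((i:ℚ) - r)) := by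
    rw [← Finset.prod_Ico_consecutive _ (show (0:ℕ)+1 ≤ i by omega) hiN]
    have h2 : ∏ r ∈ Ico i N, (∏ s ∈ Ico (r+1) N,
        (((if r = 0 then (k:ℤ) + 1 else if r < i then 1 else 0)
            - (if s = 0 then (k:ℤ) + 1 else if s < i then 1 else 0) + s - r : ℤ) : ℚ)
          / ((s : ℚ) - (r : ℚ))) = 1 := by
      refine Finset.prod_eq_one fun r hr => Finset.prod_eq_one fun s hs => ?_
      simp only [mem_Ico] at hr hs
      rw [if_neg (by omega), if_neg (by omega), if_neg (by omega), if_neg (by omega)]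
      have h1 : ((0 - 0 + s - r : ℤ) : ℚ) = (s:ℚ) - r := by push_cast; ring
      rw [h1, div_self_sub r s (by omega)]
    rw [h2, mul_one]
    refine Finset.prod_congr rfl fun r hr => ?_
    simp only [mem_Ico] at hr
    rw [← Finset.prod_Ico_consecutive _ (show r+1 ≤ i by omega) hiN]
    have h1 : ∏ s ∈ Ico (r+1) i,
        (((if r = 0 then (k:ℤ) + 1 else if r < i then 1 else 0)
            - (if s = 0 then (k:ℤ) + 1 else if s < i then 1 else 0) + s - r : ℤ) : ℚ)
          / ((s : ℚ) - (r : ℚ)) = 1 := by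
      refine Finset.prod_eq_one fun s hs => ?_
      simp only [mem_Ico] at hs
      rw [if_neg (by omega), if_pos hr.2, if_neg (by omega), if_pos (by omega)]
      have h1 : ((1 - 1 + s - r : ℤ) : ℚ) = (s:ℚ) - r := by push_cast; ring
      rw [h1, div_self_sub r s (by omega)]
    rw [h1, one_mul, ← tel_sub r i N hr.2 hiN]
    refine Finset.prod_congr rfl fun s hs => ?_
    simp only [mem_Ico] at hs
    rw [if_neg (by omega), if_pos hr.2, if_neg (by omega), if_neg (by omega)]
    push_cast; ring_nf
  rw [hhead, htail]


lemma evalD (N k i : ℕ) (hi : 1 ≤ i) (hiN : i + 1 ≤ N) :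
    weylDim N (fun j => if (j : ℕ) = 0 then (k : ℤ) else if (j : ℕ) ≤ i then 1 else 0)
      = (∏ s ∈ Ico 1 (i+1), (((k:ℚ) + s - 1) / s)) * (∏ s ∈ Ico (i+1) N, (((k:ℚ) + s) / s))
        * (∏ r ∈ Ico 1 (i+1), (((N:ℚ) - r) / ((i:ℚ) + 1 - r))) := by
  rw [weylDim_eq_prod N _ (fun n => if n = 0 then (k:ℤ) else if n ≤ i then 1 else 0)
    (fun j => rfl)]
  rw [Finset.range_eq_Ico, Finset.prod_eq_prod_Ico_succ_bot (show 0 < N by omega)]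
  have hhead : ∏ s ∈ Ico (0+1) N,
      (((if (0:ℕ) = 0 then (k:ℤ) else if 0 ≤ i then 1 else 0)
          - (if s = 0 then (k:ℤ) else if s ≤ i then 1 else 0) + (s:ℤ) - ((0:ℕ):ℤ) : ℤ) : ℚ)
        / ((s : ℚ) - ((0:ℕ) : ℚ))
      = (∏ s ∈ Ico 1 (i+1), (((k:ℚ) + s - 1) / s)) * (∏ s ∈ Ico (i+1) N, (((k:ℚ) + s) / s)) := by
    rw [← Finset.prod_Ico_consecutive _ (show (0:ℕ)+1 ≤ i+1 by omega) hiN]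
    congr 1
    · refine Finset.prod_congr rfl fun s hs => ?_
      simp only [mem_Ico] at hs
      rw [if_pos rfl, if_neg (by omega), if_pos (by omega)]
      push_cast; ring_nf
    · refine Finset.prod_congr rfl fun s hs => ?_
      simp only [mem_Ico] at hs
      rw [if_pos rfl, if_neg (by omega), if_neg (by omega)]
      push_cast; ring_nf
  have htail : ∏ r ∈ Ico (0+1) N, (∏ s ∈ Ico (r+1) N,
      (((if r = 0 then (k:ℤ) else if r ≤ i then 1 else 0)
          - (if s = 0 then (k:ℤ) else if s ≤ i then 1 else 0) + s - r : ℤ) : ℚ)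
        / ((s : ℚ) - (r : ℚ)))
      = ∏ r ∈ Ico 1 (i+1), (((N:ℚ) - r) / ((i:ℚ) + 1 - r)) := by
    rw [← Finset.prod_Ico_consecutive _ (show (0:ℕ)+1 ≤ i+1 by omega) hiN]
    have h2 : ∏ r ∈ Ico (i+1) N, (∏ s ∈ Ico (r+1) N,
        (((if r = 0 then (k:ℤ) else if r ≤ i then 1 else 0)
            - (if s = 0 then (k:ℤ) else if s ≤ i then 1 else 0) + s - r : ℤ) : ℚ)
          / ((s : ℚ) - (r : ℚ))) = 1 := by
      refine Finset.prod_eq_one fun r hr => Finset.prod_eq_one fun s hs => ?_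
      simp only [mem_Ico] at hr hs
      rw [if_neg (by omega), if_neg (by omega), if_neg (by omega), if_neg (by omega)]
      have h1 : ((0 - 0 + s - r : ℤ) : ℚ) = (s:ℚ) - r := by push_cast; ring
      rw [h1, div_self_sub r s (by omega)]
    rw [h2, mul_one]
    refine Finset.prod_congr rfl fun r hr => ?_
    simp only [mem_Ico] at hr
    rw [← Finset.prod_Ico_consecutive _ (show r+1 ≤ i+1 by omega) hiN]
    have h1 : ∏ s ∈ Ico (r+1) (i+1),
        (((if r = 0 then (k:ℤ) else if r ≤ i then 1 else 0)
            - (if s = 0 then (k:ℤ) else if s ≤ i then 1 else 0) + s - r : ℤ) : ℚ)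
          / ((s : ℚ) - (r : ℚ)) = 1 := by
      refine Finset.prod_eq_one fun s hs => ?_
      simp only [mem_Ico] at hs
      rw [if_neg (by omega), if_pos (by omega), if_neg (by omega), if_pos (by omega)]
      have h1 : ((1 - 1 + s - r : ℤ) : ℚ) = (s:ℚ) - r := by push_cast; ring
      rw [h1, div_self_sub r s (by omega)]
    rw [h1, one_mul]
    have h3 := tel_sub r (i+1) N (by omega) hiN
    push_cast at h3
    rw [← h3]
    refine Finset.prod_congr rfl fun s hs => ?_
    simp only [mem_Ico] at hs
    rw [if_neg (by omega), if_pos (by omega), if_neg (by omega), if_neg (by omega)]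
    push_cast; ring_nf
  rw [hhead, htail]

/-- For all integers `N ≥ 2`, `k ≥ 0`, and `i` with `1 ≤ i ≤ N-1`:
`WD((k,0,…,0)) * WD((1,…,1,0,…,0)) = WD((k+1,1,…,1,0,…,0)) + WD((k,1,…,1,0,…,0))`,
where on the left the second tuple has `i` ones followed by `N-i` zeros, on the right the
first tuple has `i-1` ones after the leading `k+1` followed by `N-i` zeros, and the second
has `i` ones after the leading `k` followed by `N-1-i` zeros. This expresses the fusion
`(kω₁) ⊗ ω_i = (kω₁ + ω_i) ⊕ ((k-1)ω₁ + ω_{i+1})` on the level of dimensions. -/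
theorem weylDim_fusion_identity (N k i : ℕ) (hN : 2 ≤ N) (hi1 : 1 ≤ i) (hi2 : i ≤ N - 1) :
    weylDim N (fun j => if (j : ℕ) = 0 then (k : ℤ) else 0) *
      weylDim N (fun j => if (j : ℕ) < i then 1 else 0)
    = weylDim N (fun j => if (j : ℕ) = 0 then (k : ℤ) + 1 else if (j : ℕ) < i then 1 else 0) +
      weylDim N (fun j => if (j : ℕ) = 0 then (k : ℤ) else if (j : ℕ) ≤ i then 1 else 0) := by
  have hiN : i + 1 ≤ N := by omega
  rw [evalA N k (by omega), evalB N i (by omega) (by omega), evalC N k i hi1 (by omega),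
    evalD N k i hi1 hiN]
  set p := ∏ s ∈ Ico 1 i, ((k:ℚ) + s) with hp
  set f := ∏ s ∈ Ico 1 i, ((s:ℕ):ℚ) with hf
  set q := ∏ s ∈ Ico (i+1) N, ((k:ℚ) + s) with hq
  set g := ∏ s ∈ Ico (i+1) N, ((s:ℕ):ℚ) with hg
  set c := ∏ r ∈ Ico 1 i, ((N:ℚ) - r) with hc
  set d := ∏ r ∈ Ico 1 i, ((i:ℚ) - r) with hd
  -- nonzeroness
  have hfne : f ≠ 0 := Finset.prod_ne_zero_iff.2 fun s hs => by
    simp only [mem_Ico] at hs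
    exact_mod_cast (show s ≠ 0 by omega)
  have hgne : g ≠ 0 := Finset.prod_ne_zero_iff.2 fun s hs => by
    simp only [mem_Ico] at hs
    exact_mod_cast (show s ≠ 0 by omega)
  have hIne : ((i:ℚ)) ≠ 0 := by exact_mod_cast (show i ≠ 0 by omega)
  have hdne : d ≠ 0 := Finset.prod_ne_zero_iff.2 fun r hr => by
    simp only [mem_Ico] at hr
    have : (r:ℚ) < i := by exact_mod_cast hr.2
    intro h; linarith
  have hKI : (k:ℚ) + i ≠ 0 := by
    have h1 : (0:ℚ) ≤ k := Nat.cast_nonneg k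
    have h2 : (1:ℚ) ≤ i := by exact_mod_cast hi1
    intro h; linarith
  -- closed forms
  have e1 : ∏ s ∈ Ico 1 N, (((k:ℚ) + s) / s) = (p * ((k:ℚ) + i) * q) / (f * i * g) := by
    rw [Finset.prod_div_distrib,
      ← Finset.prod_Ico_consecutive (fun s : ℕ => ((k:ℚ) + s)) (show 1 ≤ i+1 by omega) hiN,
      ← Finset.prod_Ico_consecutive (fun s : ℕ => ((s:ℕ):ℚ)) (show 1 ≤ i+1 by omega) hiN,
      Finset.prod_Ico_succ_top hi1 (fun s : ℕ => ((k:ℚ) + s)),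
      Finset.prod_Ico_succ_top hi1 (fun s : ℕ => ((s:ℕ):ℚ))]
  have e2 : ∏ r ∈ range i, (((N:ℚ) - r) / ((i:ℚ) - r)) = ((N:ℚ) * c) / ((i:ℚ) * d) := by
    rw [Finset.prod_div_distrib, Finset.range_eq_Ico,
      Finset.prod_eq_prod_Ico_succ_bot (show 0 < i by omega) (fun r : ℕ => ((N:ℚ) - r)),
      Finset.prod_eq_prod_Ico_succ_bot (show 0 < i by omega) (fun r : ℕ => ((i:ℚ) - r))]
    push_cast
    rw [sub_zero, sub_zero]
  have e3 : ∏ s ∈ Ico 1 i, (((k:ℚ) + s) / s) = p / f := Finset.prod_div_distrib _ _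
  have e4 : ∏ s ∈ Ico i N, (((k:ℚ) + 1 + s) / s) = (((k:ℚ) + N) * q) / ((i:ℚ) * g) := by
    rw [Finset.prod_div_distrib]
    congr 1
    · have h1 : ∏ s ∈ Ico i N, ((k:ℚ) + 1 + s) = ∏ s ∈ Ico (i+1) (N+1), ((k:ℚ) + s) := by
        rw [prod_Ico_shift i N (fun s => (k:ℚ) + s)]
        push_cast
        exact Finset.prod_congr rfl fun s _ => by ring
      rw [h1, Finset.prod_Ico_succ_top hiN (fun s : ℕ => ((k:ℚ) + s))]
      ring
    · rw [Finset.prod_eq_prod_Ico_succ_bot (show i < N by omega) (fun s : ℕ => ((s:ℕ):ℚ))]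
  have e5 : ∏ s ∈ Ico 1 (i+1), (((k:ℚ) + s - 1) / s) = ((k:ℚ) * p) / (f * i) := by
    rw [Finset.prod_div_distrib]
    congr 1
    · have h1 : ∏ s ∈ Ico 1 (i+1), ((k:ℚ) + s - 1) = ∏ s ∈ Ico 0 i, ((k:ℚ) + s) := by
        rw [show (1:ℕ) = 0 + 1 from rfl, prod_Ico_shift 0 i (fun s => (k:ℚ) + s - 1)]
        push_cast
        exact Finset.prod_congr rfl fun s _ => by ring
      rw [h1, Finset.prod_eq_prod_Ico_succ_bot (show 0 < i by omega) (fun s : ℕ => ((k:ℚ) + s))]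
      push_cast
      rw [add_zero]
    · rw [Finset.prod_Ico_succ_top (show 1 ≤ i by omega) (fun s : ℕ => ((s:ℕ):ℚ))]
  have e6 : ∏ s ∈ Ico (i+1) N, (((k:ℚ) + s) / s) = q / g := Finset.prod_div_distrib _ _
  have e7 : ∏ r ∈ Ico 1 (i+1), (((N:ℚ) - r) / ((i:ℚ) + 1 - r)) = (c * ((N:ℚ) - i)) / ((i:ℚ) * d) := by
    rw [Finset.prod_div_distrib]
    congr 1
    · rw [Finset.prod_Ico_succ_top hi1 (fun r : ℕ => ((N:ℚ) - r))]
    · have h1 : ∏ r ∈ Ico 1 (i+1), ((i:ℚ) + 1 - r) = ∏ r ∈ Ico 0 i, ((i:ℚ) - r) := by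
        rw [show (1:ℕ) = 0 + 1 from rfl, prod_Ico_shift 0 i (fun r => (i:ℚ) + 1 - r)]
        push_cast
        exact Finset.prod_congr rfl fun r _ => by ring
      rw [h1, Finset.prod_eq_prod_Ico_succ_bot (show 0 < i by omega) (fun r : ℕ => ((i:ℚ) - r))]
      push_cast
      rw [sub_zero]
  rw [e1, e2, e3, e4, e5, e6, e7, Finset.prod_div_distrib, ← hc, ← hd]
  field_simp
  ring
end

section
/- Let N ≥ 2, k ≥ 0, and m ≥ 1 be integers. Suppose that m divides C(k+N−1, N−1) − 1, and that for every i with 1 ≤ i ≤ N−1, m divides WD((k, 1, …, 1, 0, …, 0)) − C(N, i), where the tuple has length N with i entries equal to 1 after the leading k. Then m divides x = (k+N)/gcd(k+N, lcm(1,2,…,N−1)). (In the paper this shows that the order x_ω of twisted-brane charges on SU(N), N odd, divides the untwisted order x.) -/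
/-!
Put `N = n + 1` and `D = C(k + n, n)`. Multiplying out the Weyl product column by column gives
`(k + i) · WD(k, 1^i, 0^(n-i)) = k · C(n, i) · D`, so the hypotheses say that `m (k + i)` divides
`k C(n, i) D - (k + i) C(n + 1, i) = k C(n, i) (D - 1) - (k + n + 1) C(n, i - 1)`.

Let `p^a ∥ m` and let `q = p^s ≤ n` divide `k + n + 1`. Choosing `i = (n mod q) + 1` makes `q`
divide `n + 1 - i`, hence `k + i` and `k C(n, i)`, so `p^a q` divides `(k + n + 1) C(n, n mod q)`,
and by Lucas's theorem `p` does not divide `C(n, n mod q)`. Starting from `q = 1` and raising `s`,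
this gives `p^(a + s) ∣ k + n + 1` as long as `p^s ≤ n`, i.e. up to the exponent of `p` in
`lcm(1, …, n)`.
-/

open Finset

theorem Nat.Prime.not_dvd_choose_mod_pow {p : ℕ} (hp : p.Prime) (c n : ℕ) :
    ¬ p ∣ n.choose (n % p ^ c) := by
  induction c generalizing n with
  | zero =>
    rw [pow_zero, Nat.mod_one, Nat.choose_zero_right, Nat.dvd_one]
    exact hp.one_lt.ne'
  | succ c ih =>
    have : Fact p.Prime := ⟨hp⟩
    have hlucas := Choose.choose_modEq_choose_mod_mul_choose_div_nat (p := p) (n := n)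
      (k := n % p ^ (c + 1))
    rw [Nat.mod_mod_of_dvd n (dvd_pow_self p c.succ_ne_zero), Nat.choose_self, one_mul,
      pow_succ', Nat.mod_mul_right_div_self, ← pow_succ'] at hlucas
    exact fun h => ih (n / p) (Nat.modEq_zero_iff_dvd.1 (hlucas.symm.trans
      (Nat.modEq_zero_iff_dvd.2 h)))

theorem add_succ_mul_choose_succ_succ (k n j : ℕ) :
    (k + j + 1) * (n + 1).choose (j + 1) = k * n.choose (j + 1) + (k + n + 1) * n.choose j := by
  have hsucc := Nat.choose_succ_right_eq n j
  rcases le_or_gt j n with hjn | hjn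
  · obtain ⟨d, rfl⟩ := Nat.exists_eq_add_of_le hjn
    rw [Nat.add_sub_cancel_left] at hsucc
    rw [Nat.choose_succ_succ']
    linear_combination hsucc
  · simp [Nat.choose_eq_zero_of_lt, hjn, (by omega : n < j + 1), (by omega : n + 1 < j + 1)]

theorem dvd_div_gcd_of_forall_prime {m n L : ℕ} (hm : m ≠ 0) (hn : n ≠ 0) (hL : L ≠ 0)
    (h : ∀ p, p.Prime → 0 < m.factorization p →
      p ^ (m.factorization p + L.factorization p) ∣ n) :
    m ∣ n / n.gcd L := by
  have hg : n.gcd L ≠ 0 := Nat.gcd_ne_zero_left hn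
  refine Nat.dvd_div_of_mul_dvd ?_
  rw [← Nat.factorization_prime_le_iff_dvd (mul_ne_zero hg hm) hn]
  intro p hp
  rw [Nat.factorization_mul hg hm, add_comm, Nat.factorization_gcd hn hL, Finsupp.add_apply,
    Finsupp.inf_apply]
  rcases (m.factorization p).eq_zero_or_pos with h0 | hpos
  · rw [h0, zero_add]
    exact inf_le_left
  · have := (hp.pow_dvd_iff_le_factorization hn).1 (h p hp hpos)
    exact (add_le_add_right inf_le_right _).trans this

def weylColumn (ℓ : ℕ → ℤ) (s : ℕ) : ℚ :=
  ∏ r ∈ range s, ((ℓ r : ℚ) - ℓ s + s - r) / (s - r)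

theorem weylDim_eq_prod_weylColumn (N : ℕ) (ℓ : ℕ → ℤ) :
    weylDim N (fun j => ℓ j) = ∏ s ∈ range N, weylColumn ℓ s := by
  let F : ℕ → ℕ → ℚ := fun r s => ((ℓ r - ℓ s + s - r : ℤ) : ℚ) / (s - r : ℕ)
  calc weylDim N (fun j => ℓ j)
      = ∏ s ∈ range N, ∏ r ∈ range N, if r < s then F r s else 1 := by
        rw [weylDim, prod_comm, ← Fin.prod_univ_eq_prod_range]
        exact prod_congr rfl fun s _ =>
          (Fin.prod_univ_eq_prod_range (fun r => if r < (s : ℕ) then F r s else 1) N)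
    _ = ∏ s ∈ range N, weylColumn ℓ s := by
        refine prod_congr rfl fun s hs => ?_
        have hfilter : (range N).filter (· < s) = range s := by
          ext r; simp only [mem_filter, mem_range] at hs ⊢; omega
        rw [← prod_filter, hfilter, weylColumn]
        refine prod_congr rfl fun r hr => ?_
        simp only [F, Nat.cast_sub (mem_range.1 hr).le]
        push_cast
        rfl

def hookPartition (k i j : ℕ) : ℤ := if j = 0 then k else if j ≤ i then 1 else 0

namespace hookPartition

variable {k i j : ℕ}

theorem apply_zero : hookPartition k i 0 = k := if_pos rfl

theorem apply_of_le (hj : 1 ≤ j) (hji : j ≤ i) : hookPartition k i j = 1 := by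
  rw [hookPartition, if_neg (by omega), if_pos hji]

theorem apply_of_lt (hij : i < j) : hookPartition k i j = 0 := by
  rw [hookPartition, if_neg (by omega), if_neg (by omega)]

end hookPartition

section HookWeylDim

variable {k i : ℕ}

theorem weylColumn_hookPartition_of_le {s : ℕ} (hs : 1 ≤ s) (hsi : s ≤ i) :
    weylColumn (hookPartition k i) s = (k + s - 1) / s := by
  obtain ⟨t, rfl⟩ : ∃ t, s = t + 1 := ⟨s - 1, by omega⟩
  rw [weylColumn, prod_range_succ', prod_eq_one, hookPartition.apply_zero,
    hookPartition.apply_of_le hs hsi]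
  · push_cast
    ring
  · intro r hr
    have hrt : r < t := mem_range.1 hr
    rw [hookPartition.apply_of_le (by omega) (by omega), hookPartition.apply_of_le hs hsi]
    have : (r : ℚ) < t := by exact_mod_cast hrt
    push_cast
    rw [div_eq_one_iff_eq (by linarith)]
    ring

theorem weylColumn_hookPartition_of_lt {s : ℕ} (his : i < s) :
    weylColumn (hookPartition k i) s = (k + s) / (s - i) := by
  have hsi : (i : ℚ) < s := by exact_mod_cast his
  rw [weylColumn, ← prod_range_mul_prod_Ico _ (by omega : i + 1 ≤ s), prod_range_succ',
    prod_eq_one (s := Ico (i + 1) s)]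
  · have hrows : ∏ r ∈ range i, ((hookPartition k i (r + 1) : ℚ) - hookPartition k i s + s
        - (r + 1 : ℕ)) / (s - (r + 1 : ℕ)) = s / (s - i) := by
      refine prod_range_induction _ (fun j => (s : ℚ) / (s - j)) (by simp; omega) _
        fun j hj => ?_
      have hjs : (j : ℚ) + 1 < s := by exact_mod_cast (by omega : j + 1 < s)
      have hjs₁ : (s : ℚ) - j - 1 ≠ 0 := by linarith
      have hjs₂ : (s : ℚ) - j ≠ 0 := by linarith
      rw [hookPartition.apply_of_le (by omega) (by omega), hookPartition.apply_of_lt his]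
      push_cast
      field_simp
      ring
    have hs0 : (s : ℚ) ≠ 0 := Nat.cast_ne_zero.2 (by omega)
    have hsi' : (s : ℚ) - i ≠ 0 := by linarith
    rw [hrows, hookPartition.apply_zero, hookPartition.apply_of_lt his]
    push_cast
    field_simp
    ring
  · intro r hr
    have hr' := mem_Ico.1 hr
    have hrs : (r : ℚ) < s := by exact_mod_cast hr'.2
    rw [hookPartition.apply_of_lt (by omega), hookPartition.apply_of_lt his]
    push_cast
    rw [div_eq_one_iff_eq (by linarith)]
    ring

theorem add_mul_prod_weylColumn_hookPartition_of_le {j : ℕ} (hj : j ≤ i) :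
    ((k : ℚ) + j) * ∏ s ∈ range (j + 1), weylColumn (hookPartition k i) s
      = k * (k + j).choose j := by
  induction j with
  | zero => simp [weylColumn]
  | succ j ih =>
    specialize ih (by omega)
    have hchoose : ((k + j + 1 : ℕ) : ℚ) * (k + j).choose j
        = (k + j + 1).choose (j + 1) * (j + 1 : ℕ) := by
      exact_mod_cast Nat.add_one_mul_choose_eq (k + j) j
    rw [prod_range_succ, weylColumn_hookPartition_of_le (by omega) hj]
    push_cast at hchoose ⊢
    field_simp
    linear_combination (k + j + 1 : ℚ) * ih + k * hchoose

theorem add_mul_weylDim_hookPartition {n : ℕ} (hin : i ≤ n) :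
    ((k : ℚ) + i) * weylDim (n + 1) (fun j => hookPartition k i j)
      = k * n.choose i * (k + n).choose n := by
  rw [weylDim_eq_prod_weylColumn]
  induction n, hin using Nat.le_induction with
  | base => simpa using add_mul_prod_weylColumn_hookPartition_of_le (k := k) (le_refl i)
  | succ n hin ih =>
    have h₁ : (n.choose i : ℚ) * (n + 1 : ℕ) = (n + 1).choose i * (n + 1 - i : ℕ) := by
      exact_mod_cast Nat.choose_mul_succ_eq n i
    have h₂ : ((k + n + 1 : ℕ) : ℚ) * (k + n).choose n
        = (k + n + 1).choose (n + 1) * (n + 1 : ℕ) := by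
      exact_mod_cast Nat.add_one_mul_choose_eq (k + n) n
    have hni : (n : ℚ) + 1 - i ≠ 0 := by
      have : (i : ℚ) ≤ n := by exact_mod_cast hin
      linarith
    rw [prod_range_succ, weylColumn_hookPartition_of_lt (by omega)]
    rw [Nat.cast_sub (by omega)] at h₁
    push_cast at h₁ h₂ ⊢
    field_simp
    linear_combination (k + n + 1 : ℚ) * ih + k * (n.choose i : ℚ) * h₂
      + k * ((k + n + 1).choose (n + 1) : ℚ) * h₁

theorem mul_add_dvd_of_weylDim_hookPartition_sub_choose {m n : ℕ} (hin : i ≤ n)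
    (h : ∃ t : ℤ, weylDim (n + 1) (fun j => hookPartition k i j) - (n + 1).choose i = m * t) :
    (m : ℤ) * (k + i) ∣ k * n.choose i * (k + n).choose n - (k + i) * (n + 1).choose i := by
  obtain ⟨t, ht⟩ := h
  refine ⟨t, ?_⟩
  have hq : (k * n.choose i * (k + n).choose n - (k + i) * (n + 1).choose i : ℚ)
      = m * (k + i) * t := by
    rw [← add_mul_weylDim_hookPartition hin]
    linear_combination ((k : ℚ) + i) * ht
  exact_mod_cast hq

end HookWeylDim

section HookCongruences

variable {M k n : ℕ} {D : ℤ}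

theorem mul_dvd_mul_choose_mod
    (hD : (M : ℤ) ∣ D - 1)
    (hE : ∀ i, 1 ≤ i → i ≤ n →
      (M : ℤ) * (k + i) ∣ k * n.choose i * D - (k + i) * (n + 1).choose i)
    {q : ℕ} (hq : 0 < q) (hqn : q ≤ n) (hqk : q ∣ k + n + 1) :
    M * q ∣ (k + n + 1) * n.choose (n % q) := by
  obtain ⟨j, hj⟩ : ∃ j, j = n % q := ⟨_, rfl⟩
  rw [← hj]
  have hjq : j < q := hj ▸ Nat.mod_lt n hq
  have hq_sub : (q : ℤ) ∣ n - j := by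
    have := Int.natCast_dvd_natCast.2 (Nat.dvd_sub_mod (n := q) n)
    rwa [← hj, Nat.cast_sub (by omega)] at this
  have hq_ki : (q : ℤ) ∣ k + j + 1 := by
    have := (Int.natCast_dvd_natCast.2 hqk).sub hq_sub
    rwa [show ((k + n + 1 : ℕ) : ℤ) - (n - j) = k + j + 1 by push_cast; ring] at this
  have hq_kc : (q : ℤ) ∣ k * n.choose (j + 1) := by
    have hsucc := Nat.choose_succ_right_eq n j
    zify [(by omega : j ≤ n)] at hsucc
    rw [show (k * n.choose (j + 1) : ℤ)
        = (k + j + 1) * n.choose (j + 1) - (n - j) * n.choose j by linear_combination -hsucc]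
    exact (hq_ki.mul_right _).sub (hq_sub.mul_right _)
  have hid : ((k + n + 1) * n.choose j : ℤ) = k * n.choose (j + 1) * (D - 1)
      - (k * n.choose (j + 1) * D - (k + (j + 1 : ℕ)) * (n + 1).choose (j + 1)) := by
    have := add_succ_mul_choose_succ_succ k n j
    zify at this
    push_cast
    linear_combination -this
  have hMq : (M * q : ℤ) ∣ (k + n + 1) * n.choose j := by
    rw [hid]
    refine dvd_sub ?_ ((mul_dvd_mul_left (M : ℤ) ?_).trans (hE (j + 1) (by omega) (by omega)))
    · rw [mul_comm (M : ℤ)]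
      exact mul_dvd_mul hq_kc hD
    · exact_mod_cast hq_ki
  exact_mod_cast hMq

theorem pow_add_log_dvd {p a : ℕ} (hp : p.Prime) (ha : 1 ≤ a) (hn : 1 ≤ n)
    (hD : ((p ^ a : ℕ) : ℤ) ∣ D - 1)
    (hE : ∀ i, 1 ≤ i → i ≤ n →
      ((p ^ a : ℕ) : ℤ) * (k + i) ∣ k * n.choose i * D - (k + i) * (n + 1).choose i) :
    p ^ (a + Nat.log p n) ∣ k + n + 1 := by
  suffices h : ∀ s, p ^ s ≤ n → p ^ (a + s) ∣ k + n + 1 from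
    h _ (Nat.pow_log_le_self p (by omega))
  intro s hs
  induction s with
  | zero => simpa [Nat.mod_one] using mul_dvd_mul_choose_mod hD hE one_pos hn (one_dvd _)
  | succ s ih =>
    have hq : p ^ (s + 1) ∣ k + n + 1 :=
      (Nat.pow_dvd_pow p (by omega)).trans (ih ((Nat.pow_le_pow_right hp.pos s.le_succ).trans hs))
    have hcop : Nat.Coprime (p ^ (a + (s + 1))) (n.choose (n % p ^ (s + 1))) :=
      Nat.Coprime.pow_left _ ((Nat.Prime.coprime_iff_not_dvd hp).2 (hp.not_dvd_choose_mod_pow _ _))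
    refine hcop.dvd_of_dvd_mul_right ?_
    rw [pow_add]
    exact mul_dvd_mul_choose_mod hD hE (pow_pos hp.pos _) hs hq

end HookCongruences

/-- Let `N ≥ 2`, `k ≥ 0`, `m ≥ 1` be integers. Suppose `m` divides
`C(k+N-1, N-1) - 1`, and for every `i` with `1 ≤ i ≤ N-1`, `m` divides
`WD((k,1,…,1,0,…,0)) - C(N,i)` (the tuple of length `N` having `i` ones after the leading
`k`). Then `m` divides `x = (k+N)/gcd(k+N, lcm(1,…,N-1))`. -/
theorem twisted_charge_order_divides_x (N k m : ℕ) (hN : 2 ≤ N) (hm : 1 ≤ m)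
    (h1 : (m : ℤ) ∣ (Nat.choose (k + N - 1) (N - 1) : ℤ) - 1)
    (h2 : ∀ i, 1 ≤ i → i ≤ N - 1 →
      ∃ t : ℤ,
        weylDim N (fun j => if (j : ℕ) = 0 then (k : ℤ) else if (j : ℕ) ≤ i then 1 else 0)
          - (Nat.choose N i : ℚ) = (m : ℚ) * (t : ℚ)) :
    m ∣ (k + N) / Nat.gcd (k + N) ((Finset.Icc 1 (N - 1)).lcm id) := by
  obtain ⟨n, rfl⟩ : ∃ n, N = n + 1 := ⟨N - 1, by omega⟩
  have hD : (m : ℤ) ∣ ((k + n).choose n : ℤ) - 1 := by simpa [← add_assoc] using h1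
  have hE : ∀ i, 1 ≤ i → i ≤ n →
      (m : ℤ) * (k + i) ∣ k * n.choose i * (k + n).choose n - (k + i) * (n + 1).choose i :=
    fun i hi hin => mul_add_dvd_of_weylDim_hookPartition_sub_choose hin (h2 i hi (by omega))
  rw [Nat.add_sub_cancel, ← add_assoc]
  change m ∣ (k + n + 1) / (k + n + 1).gcd (Nat.lcmUpto n)
  refine dvd_div_gcd_of_forall_prime (by omega) (by omega) (Nat.lcmUpto_ne_zero n)
    fun p hp ha => ?_
  have hpm : ((p ^ m.factorization p : ℕ) : ℤ) ∣ m :=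
    Int.natCast_dvd_natCast.2 (Nat.ordProj_dvd m p)
  rw [Nat.factorization_lcmUpto n hp]
  exact pow_add_log_dvd hp ha (by omega) (hpm.trans hD)
    fun i hi hin => (mul_dvd_mul_right hpm _).trans (hE i hi hin)
end
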